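/- Let G satisfy the general conditions on the nonlinearity, and suppose G(y)/y is unbounded near zero, strictly decreasing on (0,∞), and there exists a sequence (yₙ) of positive reals with yₙ → +∞ and G(yₙ)/yₙ → 0. Then for every α ≥ 0 and every β > 0 there exists exactly one y > 0 with G(α + βy) = y. -/

import Mathlib

/-!
Set `f y = G (α + β y)`. Since `G y / y` is unbounded near `0`, `f` lies above the diagonal at
some small `y > 0`; along the sequence `yₙ → ∞` with `G yₙ / yₙ → 0` it lies below the diagonal,
so the intermediate value theorem gives a positive fixed point. A positive fixed point `y` has
`G z / z = y / (α + β y)` at `z = α + β y`; the right side is nondecreasing in `y` while the left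
side strictly decreases in `z`, so there is only one.
-/

open Set Filter

variable {G : ℝ → ℝ} {α β : ℝ}

theorem exists_pos_lt_comp_affine (hG_mono : MonotoneOn G (Ici 0))
    (hG_unb : ∀ M > (0 : ℝ), ∃ y : ℝ, 0 < y ∧ G y > M * y) (hα : 0 ≤ α) (hβ : 0 < β) :
    ∃ a > 0, a < G (α + β * a) := by
  obtain ⟨z, hz, hGz⟩ := hG_unb β⁻¹ (inv_pos.2 hβ)
  refine ⟨z / β, div_pos hz hβ, ?_⟩
  calc z / β = β⁻¹ * z := by ring
    _ < G z := hGz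
    _ ≤ G (α + z) := hG_mono hz.le (mem_Ici.2 (by linarith)) (by linarith)
    _ = G (α + β * (z / β)) := by rw [mul_div_cancel₀ z hβ.ne']

theorem exists_gt_comp_affine_lt {ι : Type*} {l : Filter ι} [l.NeBot] {w : ι → ℝ}
    (hw : Tendsto w l atTop) (hGw : Tendsto (fun i => G (w i) / w i) l (nhds 0))
    (hβ : 0 < β) (c : ℝ) : ∃ b > c, G (α + β * b) < b := by
  obtain ⟨i, hi_large, hi_ratio⟩ :=
    ((hw.eventually_gt_atTop (max (α + β * c) (max (2 * α) 0))).and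
      (hGw.eventually_lt_const (by positivity : (0 : ℝ) < 1 / (2 * β)))).exists
  simp only [max_lt_iff] at hi_large
  obtain ⟨hi_c, hi_α, hi_pos⟩ := hi_large
  have hGwi : G (w i) < w i / (2 * β) := by
    rwa [div_lt_iff₀ hi_pos, one_div_mul_eq_div] at hi_ratio
  refine ⟨(w i - α) / β, ?_, ?_⟩
  · rw [gt_iff_lt, lt_div_iff₀ hβ]
    linarith
  · rw [mul_div_cancel₀ _ hβ.ne', add_sub_cancel]
    calc G (w i) < w i / (2 * β) := hGwi
      _ ≤ (w i - α) / β := by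
        rw [div_le_div_iff₀ (by positivity) hβ]
        nlinarith

theorem eq_of_comp_affine_eq_self (hG_dec : StrictAntiOn (fun y => G y / y) (Ioi 0))
    (hα : 0 ≤ α) (hβ : 0 < β) {u v : ℝ} (hu : 0 < u) (hv : 0 < v)
    (hfu : G (α + β * u) = u) (hfv : G (α + β * v) = v) : u = v := by
  suffices ∀ {u v : ℝ}, 0 < u → G (α + β * u) = u → G (α + β * v) = v → ¬ u < v from
    le_antisymm (not_lt.1 (this hv hfv hfu)) (not_lt.1 (this hu hfu hfv))
  intro u v hu hfu hfv huv
  have hzu : 0 < α + β * u := by positivity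
  have hzv : α + β * u < α + β * v := by gcongr
  have hratio := hG_dec hzu (hzu.trans hzv) hzv
  simp only [hfu, hfv] at hratio
  rw [div_lt_div_iff₀ (hzu.trans hzv) hzu] at hratio
  nlinarith

theorem lemma3_uniqueness_general (G : ℝ → ℝ)
    (hG_cont : ContinuousOn G (Set.Ici 0))
    (hG_mono : StrictMonoOn G (Set.Ici 0))
    (hG_unb0 : ∀ δ > (0:ℝ), ∀ M > (0:ℝ), ∃ y : ℝ, 0 < y ∧ y < δ ∧ G y > M * y)
    (hG_dec : ∀ y₁ y₂ : ℝ, 0 < y₁ → y₁ < y₂ → G y₂ / y₂ < G y₁ / y₁)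
    (yseq : ℕ → ℝ)
    (hseq_div : Filter.Tendsto yseq Filter.atTop Filter.atTop)
    (hseq_ratio : Filter.Tendsto (fun n => G (yseq n) / yseq n) Filter.atTop (nhds 0)) :
    ∀ α ≥ (0:ℝ), ∀ β > (0:ℝ), ∃! y : ℝ, 0 < y ∧ G (α + β * y) = y := by
  intro α hα β hβ
  obtain ⟨a, ha, ha_lt⟩ := exists_pos_lt_comp_affine hG_mono.monotoneOn
    (fun M hM => (hG_unb0 1 one_pos M hM).imp fun _ h => ⟨h.1, h.2.2⟩) hα hβ
  obtain ⟨b, hab, hb_lt⟩ := exists_gt_comp_affine_lt hseq_div hseq_ratio (α := α) hβ a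
  have hcont : ContinuousOn (fun y => G (α + β * y)) (Icc a b) :=
    hG_cont.comp (by fun_prop) fun y hy => mem_Ici.2 (by nlinarith [hy.1])
  obtain ⟨c, hc, hc_fixed⟩ := exists_mem_Icc_isFixedPt hcont hab.le ha_lt.le hb_lt.le
  have hc_pos : 0 < c := ha.trans_le hc.1
  refine ⟨c, ⟨hc_pos, hc_fixed⟩, fun y ⟨hy, hy_fixed⟩ => ?_⟩
  exact eq_of_comp_affine_eq_self (fun y₁ hy₁ y₂ _ h => hG_dec y₁ y₂ hy₁ h) hα hβ hy hc_pos
    hy_fixed hc_fixed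

/-- Lemma 3, uniqueness part: if `G` satisfies the general conditions on the nonlinearity,
`G y / y` is unbounded near zero, strictly decreasing on `(0, ∞)`, and there is a sequence of
positive reals `yₙ → +∞` with `G yₙ / yₙ → 0`, then for every `α ≥ 0` and every `β > 0`, the
map `y ↦ G (α + β * y)` has exactly one nonzero fixed point. -/
theorem lemma3_uniqueness (G : ℝ → ℝ)
    (hG_cont : ContinuousOn G (Set.Ici 0))
    (hG_mono : StrictMonoOn G (Set.Ici 0))
    (hG_nonneg : ∀ y ≥ (0:ℝ), 0 ≤ G y)
    (hG0 : G 0 = 0)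
    (hG_unb0 : ∀ δ > (0:ℝ), ∀ M > (0:ℝ), ∃ y : ℝ, 0 < y ∧ y < δ ∧ G y > M * y)
    (hG_dec : ∀ y₁ y₂ : ℝ, 0 < y₁ → y₁ < y₂ → G y₂ / y₂ < G y₁ / y₁)
    (yseq : ℕ → ℝ)
    (hseq_pos : ∀ n, 0 < yseq n)
    (hseq_div : Filter.Tendsto yseq Filter.atTop Filter.atTop)
    (hseq_ratio : Filter.Tendsto (fun n => G (yseq n) / yseq n) Filter.atTop (nhds 0)) :
    ∀ α ≥ (0:ℝ), ∀ β > (0:ℝ), ∃! y : ℝ, 0 < y ∧ G (α + β * y) = y :=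
  lemma3_uniqueness_general G hG_cont hG_mono hG_unb0 hG_dec yseq hseq_div hseq_ratio
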